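/- arXiv:1703.04905 — 3 statements merged into one kernel-verified Lean document; each statement's English description precedes it below -/
import Mathlib

section
/- For every p with 1 ≤ p < 2 there exists δ = δ(p) > 0 such that for every R > 0 there is a constant C = C(p,R) > 0 with the following property: for every a ∈ ℂ with a ≠ 0, the function u ↦ 1/(u(√u − a)) satisfies ‖u ↦ 1/(u(√u − a))‖_{L^p({u ∈ ℂ : |u| < R})} ≤ C(1 + |a|^{−1+δ}). -/
/-!
With `w = √u` we have `w² = u`, so `1 / (u (w - a)) = (w + a) / (u (u - a²))` and
`|f u| ≤ |u|^(-1/2) |u - a²|^(-1) + |a| |u|^(-1) |u - a²|^(-1)`; by Minkowski it suffices to bound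
the `L^p` norms of `|x|^(-α) |x - c|^(-β)` on a ball, for `c = a²`. Cutting out the balls of
radius `|c|/2` around `0` and `c`, the scaling `∫_{|x|<s} |x|^(-γ) = s^(d-γ) ∫_{|x|<1} |x|^(-γ)`
bounds the two pieces near the singularities, and on the rest `|x - c| ≥ |x|/3`; this gives
`O(|c|^(-q))` for bounded `c`, which becomes `O(|a|^(-1+δ))` with `δ = 2/p - 1`. For large `a`,
`|√u - a| ≥ 1/2` on the disk, and `|u|^(-1)` is in `L^p` because `p < 2`.
-/

open MeasureTheory Complex Metric Module

theorem norm_rpow_neg_mul_norm_sub_rpow_neg_le {E : Type*} [SeminormedAddCommGroup E]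
    {x c : E} {r α β q : ℝ} (hr : 0 < r) (hc : ‖c‖ ≤ 2 * r) (hx : r ≤ ‖x‖) (hxc : r ≤ ‖x - c‖)
    (hβ : 0 ≤ β) (hq : 0 ≤ q) :
    ‖x‖ ^ (-α) * ‖x - c‖ ^ (-β) ≤ 3 ^ β * r ^ (-q) * ‖x‖ ^ (-(α + β - q)) := by
  have hx0 : 0 < ‖x‖ := hr.trans_le hx
  have hthird : ‖x‖ / 3 ≤ ‖x - c‖ := by linarith [norm_sub_norm_le x c]
  have hsplit : ‖x‖ ^ (-α) * (‖x‖ / 3) ^ (-β) = 3 ^ β * (‖x‖ ^ (-q) * ‖x‖ ^ (-(α + β - q))) := by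
    rw [Real.div_rpow hx0.le (by norm_num), Real.rpow_neg (by norm_num : (0:ℝ) ≤ 3),
      div_inv_eq_mul, ← Real.rpow_add hx0, show -q + -(α + β - q) = -α + -β by ring,
      Real.rpow_add hx0]
    ring
  calc ‖x‖ ^ (-α) * ‖x - c‖ ^ (-β)
      ≤ ‖x‖ ^ (-α) * (‖x‖ / 3) ^ (-β) :=
        mul_le_mul_of_nonneg_left
          (Real.rpow_le_rpow_of_nonpos (by positivity) hthird (neg_nonpos.mpr hβ)) (by positivity)
    _ ≤ 3 ^ β * r ^ (-q) * ‖x‖ ^ (-(α + β - q)) := by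
        rw [hsplit, mul_assoc]
        exact mul_le_mul_of_nonneg_left (mul_le_mul_of_nonneg_right
          (Real.rpow_le_rpow_of_nonpos hr hx (neg_nonpos.mpr hq)) (by positivity)) (by positivity)

theorem setLIntegral_ball_sdiff_norm_rpow_neg_mul_norm_sub_rpow_neg_le {E : Type*}
    [SeminormedAddCommGroup E] [MeasurableSpace E] [OpensMeasurableSpace E] (μ : Measure E)
    {c : E} {r α β q R : ℝ} (hr : 0 < r) (hc : ‖c‖ ≤ 2 * r) (hβ : 0 ≤ β) (hq : 0 ≤ q) :
    ∫⁻ x in ball 0 R \ (ball 0 r ∪ ball c r), ENNReal.ofReal (‖x‖ ^ (-α) * ‖x - c‖ ^ (-β)) ∂μ ≤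
      ENNReal.ofReal (3 ^ β * r ^ (-q)) *
        ∫⁻ x in ball 0 R, ENNReal.ofReal (‖x‖ ^ (-(α + β - q))) ∂μ := by
  have hpt : ∀ x ∈ ball 0 R \ (ball 0 r ∪ ball c r),
      ENNReal.ofReal (‖x‖ ^ (-α) * ‖x - c‖ ^ (-β)) ≤
        ENNReal.ofReal (3 ^ β * r ^ (-q)) * ENNReal.ofReal (‖x‖ ^ (-(α + β - q))) := by
    intro x hx
    simp only [Set.mem_sdiff, Set.mem_union, mem_ball_iff_norm, sub_zero, not_or, not_lt] at hx
    rw [← ENNReal.ofReal_mul (by positivity)]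
    exact ENNReal.ofReal_le_ofReal
      (norm_rpow_neg_mul_norm_sub_rpow_neg_le hr hc hx.2.1 hx.2.2 hβ hq)
  calc _ ≤ ∫⁻ x in ball 0 R \ (ball 0 r ∪ ball c r), ENNReal.ofReal (3 ^ β * r ^ (-q)) *
          ENNReal.ofReal (‖x‖ ^ (-(α + β - q))) ∂μ :=
        setLIntegral_mono' (measurableSet_ball.diff (measurableSet_ball.union measurableSet_ball))
          hpt
    _ ≤ _ := by
        rw [lintegral_const_mul' _ _ ENNReal.ofReal_ne_top]
        exact mul_le_mul_right (lintegral_mono_set Set.sdiff_subset) _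

theorem eLpNorm_ofReal_eq_lintegral {X : Type*} [MeasurableSpace X] (ν : Measure X) {f : X → ℝ}
    (hf : ∀ x, 0 ≤ f x) {p : ℝ} (hp : 0 < p) :
    eLpNorm f (ENNReal.ofReal p) ν = (∫⁻ x, ENNReal.ofReal (f x ^ p) ∂ν) ^ (1 / p) := by
  rw [eLpNorm_eq_lintegral_rpow_enorm_toReal (by simpa using hp) ENNReal.ofReal_ne_top,
    ENNReal.toReal_ofReal hp.le]
  simp_rw [Real.enorm_eq_ofReal (hf _), ENNReal.ofReal_rpow_of_nonneg (hf _) hp.le]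

section AddHaar

variable {E : Type*} [NormedAddCommGroup E] [NormedSpace ℝ E] [FiniteDimensional ℝ E]
  [MeasurableSpace E] [BorelSpace E] [Nontrivial E] (μ : Measure E) [μ.IsAddHaarMeasure]

theorem integrableOn_ball_norm_rpow_neg {γ : ℝ} (hγ : γ < finrank ℝ E) (r : ℝ) :
    IntegrableOn (fun x : E ↦ ‖x‖ ^ (-γ)) (ball 0 r) μ :=
  integrableOn_ball_of_norm_le_rpow (C := 1) finrank_pos hγ
    (ae_of_all _ fun x ↦ by simp [abs_of_nonneg (Real.rpow_nonneg (norm_nonneg x) _)])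
    (measurable_norm.pow_const _).aestronglyMeasurable

theorem lintegral_ball_norm_rpow_neg_lt_top {γ : ℝ} (hγ : γ < finrank ℝ E) (r : ℝ) :
    ∫⁻ x in ball 0 r, ENNReal.ofReal (‖x‖ ^ (-γ)) ∂μ < ⊤ :=
  (integrableOn_ball_norm_rpow_neg μ hγ r).lintegral_lt_top

theorem lintegral_ball_norm_rpow_neg_eq {γ : ℝ} (hγ : γ < finrank ℝ E) {s : ℝ} (hs : 0 < s) :
    ∫⁻ x in ball 0 s, ENNReal.ofReal (‖x‖ ^ (-γ)) ∂μ =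
      ENNReal.ofReal (s ^ (finrank ℝ E - γ)) *
        ∫⁻ x in ball 0 1, ENNReal.ofReal (‖x‖ ^ (-γ)) ∂μ := by
  have hpos : ∀ r, 0 ≤ᵐ[μ.restrict (ball 0 r)] fun x : E ↦ ‖x‖ ^ (-γ) :=
    fun r ↦ ae_of_all _ fun x ↦ Real.rpow_nonneg (norm_nonneg x) _
  have hscale : ∫ x in ball (0 : E) 1, ‖s • x‖ ^ (-γ) ∂μ =
      (s ^ finrank ℝ E)⁻¹ • ∫ x in ball (0 : E) s, ‖x‖ ^ (-γ) ∂μ := by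
    rw [Measure.setIntegral_comp_smul_of_pos μ (fun x : E ↦ ‖x‖ ^ (-γ)) _ hs,
      smul_unitBall_of_pos hs]
  have hhom : ∀ x : E, ‖s • x‖ ^ (-γ) = s ^ (-γ) * ‖x‖ ^ (-γ) := fun x ↦ by
    rw [norm_smul, Real.norm_of_nonneg hs.le, Real.mul_rpow hs.le (norm_nonneg x)]
  simp only [hhom, integral_const_mul, smul_eq_mul] at hscale
  have hs_pow : s ^ (finrank ℝ E - γ) = s ^ finrank ℝ E * s ^ (-γ) := by
    rw [sub_eq_add_neg, Real.rpow_add hs, Real.rpow_natCast]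
  rw [← ofReal_integral_eq_lintegral_ofReal (integrableOn_ball_norm_rpow_neg μ hγ s) (hpos s),
    ← ofReal_integral_eq_lintegral_ofReal (integrableOn_ball_norm_rpow_neg μ hγ 1) (hpos 1),
    ← ENNReal.ofReal_mul (Real.rpow_nonneg hs.le _), hs_pow, mul_assoc, hscale,
    mul_inv_cancel_left₀ (pow_ne_zero _ hs.ne')]

theorem setLIntegral_ball_zero_norm_rpow_neg_mul_norm_sub_rpow_neg_le_of_two_mul_le_norm
    {α β : ℝ}
    (hα : α < finrank ℝ E) (hβ : 0 ≤ β) :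
    ∃ K : ℝ, 0 ≤ K ∧ ∀ r : ℝ, 0 < r → ∀ c : E, 2 * r ≤ ‖c‖ →
      ∫⁻ x in ball 0 r, ENNReal.ofReal (‖x‖ ^ (-α) * ‖x - c‖ ^ (-β)) ∂μ ≤
        ENNReal.ofReal (K * r ^ (finrank ℝ E - α - β)) := by
  set I := ∫⁻ x in ball (0 : E) 1, ENNReal.ofReal (‖x‖ ^ (-α)) ∂μ
  refine ⟨I.toReal, ENNReal.toReal_nonneg, fun r hr c hc ↦ ?_⟩
  have hpt : ∀ x ∈ ball (0 : E) r, ENNReal.ofReal (‖x‖ ^ (-α) * ‖x - c‖ ^ (-β)) ≤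
      ENNReal.ofReal (r ^ (-β)) * ENNReal.ofReal (‖x‖ ^ (-α)) := fun x hx ↦ by
    have hxc : r ≤ ‖x - c‖ := by
      rw [norm_sub_rev]
      linarith [norm_sub_norm_le c x, mem_ball_zero_iff.mp hx]
    rw [← ENNReal.ofReal_mul (by positivity), mul_comm]
    exact ENNReal.ofReal_le_ofReal <| mul_le_mul_of_nonneg_right
      (Real.rpow_le_rpow_of_nonpos hr hxc (neg_nonpos.mpr hβ)) (by positivity)
  have hexp : r ^ (finrank ℝ E - α - β) = r ^ (-β) * r ^ (finrank ℝ E - α) := by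
    rw [← Real.rpow_add hr]; ring_nf
  calc ∫⁻ x in ball 0 r, ENNReal.ofReal (‖x‖ ^ (-α) * ‖x - c‖ ^ (-β)) ∂μ
      ≤ ∫⁻ x in ball 0 r, ENNReal.ofReal (r ^ (-β)) * ENNReal.ofReal (‖x‖ ^ (-α)) ∂μ :=
        setLIntegral_mono' measurableSet_ball hpt
    _ = ENNReal.ofReal (r ^ (-β)) * (ENNReal.ofReal (r ^ (finrank ℝ E - α)) * I) := by
        rw [lintegral_const_mul' _ _ ENNReal.ofReal_ne_top, lintegral_ball_norm_rpow_neg_eq μ hα hr]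
    _ = ENNReal.ofReal (I.toReal * r ^ (finrank ℝ E - α - β)) := by
        rw [ENNReal.ofReal_mul ENNReal.toReal_nonneg,
          ENNReal.ofReal_toReal (lintegral_ball_norm_rpow_neg_lt_top μ hα 1).ne, hexp,
          ENNReal.ofReal_mul (by positivity)]
        ring

theorem setLIntegral_ball_center_norm_rpow_neg_mul_norm_sub_rpow_neg_le_of_two_mul_le_norm
    {α β : ℝ}
    (hβ : β < finrank ℝ E) (hα : 0 ≤ α) :
    ∃ K : ℝ, 0 ≤ K ∧ ∀ r : ℝ, 0 < r → ∀ c : E, 2 * r ≤ ‖c‖ →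
      ∫⁻ x in ball c r, ENNReal.ofReal (‖x‖ ^ (-α) * ‖x - c‖ ^ (-β)) ∂μ ≤
        ENNReal.ofReal (K * r ^ (finrank ℝ E - α - β)) := by
  obtain ⟨K, hK, hbound⟩ :=
    setLIntegral_ball_zero_norm_rpow_neg_mul_norm_sub_rpow_neg_le_of_two_mul_le_norm μ hβ hα
  refine ⟨K, hK, fun r hr c hc ↦ ?_⟩
  have htrans := (measurePreserving_add_right μ c).setLIntegral_comp_preimage_emb
    (measurableEmbedding_addRight c)
    (fun x ↦ ENNReal.ofReal (‖x‖ ^ (-α) * ‖x - c‖ ^ (-β))) (ball c r)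
  simp only [Metric.preimage_add_right_ball, sub_self, add_sub_cancel_right] at htrans
  rw [← htrans, show finrank ℝ E - α - β = (finrank ℝ E : ℝ) - β - α by ring]
  convert hbound r hr (-c) (by rwa [norm_neg]) using 3 with x
  rw [sub_neg_eq_add, mul_comm]

theorem setLIntegral_ball_zero_norm_rpow_neg_mul_norm_sub_rpow_neg_le_of_norm_le {α β q : ℝ}
    (hα₀ : 0 ≤ α) (hα : α < finrank ℝ E) (hβ₀ : 0 ≤ β) (hβ : β < finrank ℝ E)
    (hq₀ : 0 ≤ q) (hq : α + β - finrank ℝ E < q) (R M : ℝ) :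
    ∃ K : ℝ, 0 ≤ K ∧ ∀ c : E, c ≠ 0 → ‖c‖ ≤ M →
      ∫⁻ x in ball 0 R, ENNReal.ofReal (‖x‖ ^ (-α) * ‖x - c‖ ^ (-β)) ∂μ ≤
        ENNReal.ofReal (K * ‖c‖ ^ (-q)) := by
  obtain ⟨K₀, hK₀, hnear₀⟩ :=
    setLIntegral_ball_zero_norm_rpow_neg_mul_norm_sub_rpow_neg_le_of_two_mul_le_norm μ hα hβ₀
  obtain ⟨K₁, hK₁, hnear₁⟩ :=
    setLIntegral_ball_center_norm_rpow_neg_mul_norm_sub_rpow_neg_le_of_two_mul_le_norm μ hβ hα₀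
  set e := (finrank ℝ E : ℝ) - α - β
  set J := ∫⁻ x in ball (0 : E) R, ENNReal.ofReal (‖x‖ ^ (-(α + β - q))) ∂μ
  have hJ : J ≠ ⊤ := (lintegral_ball_norm_rpow_neg_lt_top μ (by linarith) R).ne
  refine ⟨2 ^ q * ((K₀ + K₁) * |M| ^ (e + q) + 3 ^ β * J.toReal), by positivity,
    fun c hc hcM ↦ ?_⟩
  set F := fun x : E ↦ ENNReal.ofReal (‖x‖ ^ (-α) * ‖x - c‖ ^ (-β))
  obtain ⟨r, hcr⟩ : ∃ r, ‖c‖ = 2 * r := ⟨‖c‖ / 2, by ring⟩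
  have hr : 0 < r := by linarith [norm_pos_iff.mpr hc]
  have hr_e : r ^ e ≤ r ^ (-q) * |M| ^ (e + q) :=
    calc r ^ e = r ^ (-q) * r ^ (e + q) := by rw [← Real.rpow_add hr]; ring_nf
      _ ≤ r ^ (-q) * |M| ^ (e + q) := mul_le_mul_of_nonneg_left
          (Real.rpow_le_rpow hr.le (by linarith [le_abs_self M]) (by linarith)) (by positivity)
  have hr_q : r ^ (-q) = 2 ^ q * ‖c‖ ^ (-q) := by
    rw [hcr, Real.mul_rpow zero_le_two hr.le, ← mul_assoc, ← Real.rpow_add two_pos,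
      add_neg_cancel, Real.rpow_zero, one_mul]
  calc ∫⁻ x in ball 0 R, F x ∂μ
      ≤ ∫⁻ x in ball 0 r ∪ ball c r ∪ ball 0 R \ (ball 0 r ∪ ball c r), F x ∂μ :=
        lintegral_mono_set fun x hx ↦ by
          by_cases h : x ∈ ball 0 r ∪ ball c r
          exacts [Or.inl h, Or.inr ⟨hx, h⟩]
    _ ≤ ∫⁻ x in ball 0 r, F x ∂μ + ∫⁻ x in ball c r, F x ∂μ +
          ∫⁻ x in ball 0 R \ (ball 0 r ∪ ball c r), F x ∂μ :=
        (lintegral_union_le _ _ _).trans (add_le_add_left (lintegral_union_le _ _ _) _)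
    _ ≤ ENNReal.ofReal (K₀ * r ^ e) + ENNReal.ofReal (K₁ * r ^ e) +
          ENNReal.ofReal (3 ^ β * r ^ (-q)) * ENNReal.ofReal J.toReal := by
        rw [ENNReal.ofReal_toReal hJ]
        gcongr
        exacts [hnear₀ r hr c hcr.ge, hnear₁ r hr c hcr.ge,
          setLIntegral_ball_sdiff_norm_rpow_neg_mul_norm_sub_rpow_neg_le μ hr hcr.le hβ₀ hq₀]
    _ ≤ ENNReal.ofReal (2 ^ q * ((K₀ + K₁) * |M| ^ (e + q) + 3 ^ β * J.toReal) * ‖c‖ ^ (-q)) := by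
        rw [← ENNReal.ofReal_mul (by positivity), ← ENNReal.ofReal_add (by positivity)
          (by positivity), ← ENNReal.ofReal_add (by positivity) (by positivity)]
        refine ENNReal.ofReal_le_ofReal ?_
        have := mul_le_mul_of_nonneg_left hr_e (add_nonneg hK₀ hK₁)
        rw [hr_q] at this ⊢
        nlinarith [Real.rpow_nonneg (norm_nonneg c) (-q)]

theorem eLpNorm_norm_rpow_neg_lt_top {p γ : ℝ} (hp : 0 < p) (hγ : p * γ < finrank ℝ E) (R : ℝ) :
    eLpNorm (fun x : E ↦ ‖x‖ ^ (-γ)) (ENNReal.ofReal p) (μ.restrict (ball 0 R)) < ⊤ := by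
  rw [eLpNorm_ofReal_eq_lintegral _ (fun x ↦ Real.rpow_nonneg (norm_nonneg x) _) hp]
  simp_rw [← Real.rpow_mul (norm_nonneg _), neg_mul, mul_comm γ p]
  exact ENNReal.rpow_lt_top_of_nonneg (by positivity)
    (lintegral_ball_norm_rpow_neg_lt_top μ hγ R).ne

theorem eLpNorm_norm_rpow_neg_mul_norm_sub_rpow_neg_le_of_norm_le {p α β q : ℝ} (hp : 0 < p)
    (hα₀ : 0 ≤ α) (hα : p * α < finrank ℝ E) (hβ₀ : 0 ≤ β) (hβ : p * β < finrank ℝ E)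
    (hq₀ : 0 ≤ q) (hq : p * (α + β - q) < finrank ℝ E) (R M : ℝ) :
    ∃ K : ℝ, 0 ≤ K ∧ ∀ c : E, c ≠ 0 → ‖c‖ ≤ M →
      eLpNorm (fun x ↦ ‖x‖ ^ (-α) * ‖x - c‖ ^ (-β)) (ENNReal.ofReal p) (μ.restrict (ball 0 R)) ≤
        ENNReal.ofReal (K * ‖c‖ ^ (-q)) := by
  obtain ⟨K, hK, hbound⟩ :=
    setLIntegral_ball_zero_norm_rpow_neg_mul_norm_sub_rpow_neg_le_of_norm_le μ (q := p * q)
      (by positivity) hα (by positivity) hβ (by positivity) (by linarith) R M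
  refine ⟨K ^ (1 / p), by positivity, fun c hc hcM ↦ ?_⟩
  have hpow : ∀ x : E, (‖x‖ ^ (-α) * ‖x - c‖ ^ (-β)) ^ p =
      ‖x‖ ^ (-(p * α)) * ‖x - c‖ ^ (-(p * β)) := fun x ↦ by
    rw [Real.mul_rpow (by positivity) (by positivity), ← Real.rpow_mul (norm_nonneg _),
      ← Real.rpow_mul (norm_nonneg _)]
    ring_nf
  rw [eLpNorm_ofReal_eq_lintegral _ (fun x ↦ by positivity) hp]
  simp_rw [hpow]
  calc (∫⁻ x in ball 0 R, ENNReal.ofReal (‖x‖ ^ (-(p * α)) * ‖x - c‖ ^ (-(p * β))) ∂μ) ^ (1 / p)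
      ≤ ENNReal.ofReal (K * ‖c‖ ^ (-(p * q))) ^ (1 / p) :=
        ENNReal.rpow_le_rpow (hbound c hc hcM) (by positivity)
    _ = ENNReal.ofReal (K ^ (1 / p) * ‖c‖ ^ (-q)) := by
        rw [ENNReal.ofReal_rpow_of_nonneg (by positivity) (by positivity),
          Real.mul_rpow hK (by positivity), ← Real.rpow_mul (norm_nonneg _)]
        congr 3
        field_simp

theorem one_div_mul_sub_eq_add_div {K : Type*} [Field K] {u w a : K} (hw : w ^ 2 = u)
    (hu : u ≠ a ^ 2) : 1 / (u * (w - a)) = (w + a) / (u * (u - a ^ 2)) := by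
  rcases eq_or_ne u 0 with rfl | hu₀
  · simp
  have hwa : w - a ≠ 0 := fun h ↦ hu (by rw [← hw, sub_eq_zero.mp h])
  have hfactor : u - a ^ 2 = (w - a) * (w + a) := by rw [← hw]; ring
  have hwa' : w + a ≠ 0 := fun h ↦ hu (by rw [← hw, eq_neg_of_add_eq_zero_left h]; ring)
  rw [hfactor]
  field_simp

namespace Complex

theorem cpow_one_half_sq (u : ℂ) : (u ^ (1 / 2 : ℂ)) ^ 2 = u := by
  rw [one_div]
  exact cpow_ofNat_inv_pow u 2

theorem norm_cpow_one_half (u : ℂ) : ‖u ^ (1 / 2 : ℂ)‖ = ‖u‖ ^ (1 / 2 : ℝ) := by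
  simpa using norm_cpow_real u (1 / 2)

theorem norm_one_div_mul_cpow_one_half_sub_le {a u : ℂ} (hu : u ≠ a ^ 2) :
    ‖1 / (u * (u ^ (1 / 2 : ℂ) - a))‖ ≤
      ‖u‖ ^ (-(1 / 2 : ℝ)) * ‖u - a ^ 2‖ ^ (-1 : ℝ) +
        ‖a‖ * (‖u‖ ^ (-1 : ℝ) * ‖u - a ^ 2‖ ^ (-1 : ℝ)) := by
  rcases eq_or_ne u 0 with rfl | hu₀
  · simp only [zero_mul, div_zero, norm_zero]
    positivity
  have hu_pos : 0 < ‖u‖ := norm_pos_iff.mpr hu₀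
  have huc_pos : 0 < ‖u - a ^ 2‖ := norm_pos_iff.mpr (sub_ne_zero.mpr hu)
  rw [one_div_mul_sub_eq_add_div (cpow_one_half_sq u) hu, norm_div, norm_mul]
  calc ‖u ^ (1 / 2 : ℂ) + a‖ / (‖u‖ * ‖u - a ^ 2‖)
      ≤ (‖u‖ ^ (1 / 2 : ℝ) + ‖a‖) / (‖u‖ * ‖u - a ^ 2‖) := by
        gcongr
        exact (norm_add_le _ _).trans_eq (by rw [norm_cpow_one_half])
    _ = _ := by
        have hsq : (‖u‖ ^ (1 / 2 : ℝ)) ^ 2 = ‖u‖ := by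
          rw [← Real.rpow_natCast, ← Real.rpow_mul hu_pos.le]
          norm_num
        have hs : 0 < ‖u‖ ^ (1 / 2 : ℝ) := by positivity
        rw [Real.rpow_neg_one, Real.rpow_neg_one, Real.rpow_neg hu_pos.le]
        generalize ‖u‖ ^ (1 / 2 : ℝ) = s at hsq hs ⊢
        rw [← hsq]
        field_simp

theorem norm_one_div_mul_cpow_one_half_sub_le_of_large {a u : ℂ} {R : ℝ} (hu : ‖u‖ < R)
    (haR : 4 * R ≤ ‖a‖ ^ 2) (ha : 1 ≤ ‖a‖) :
    ‖1 / (u * (u ^ (1 / 2 : ℂ) - a))‖ ≤ 2 * ‖u‖ ^ (-1 : ℝ) := by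
  rcases eq_or_ne u 0 with rfl | hu₀
  · simp only [zero_mul, div_zero, norm_zero]
    positivity
  set w := u ^ (1 / 2 : ℂ)
  have hw : ‖w‖ ^ 2 = ‖u‖ := by rw [← norm_pow, cpow_one_half_sq]
  have hwa : 1 / 2 ≤ ‖w - a‖ := by
    have : 2 * ‖w‖ < ‖a‖ := by nlinarith [norm_nonneg w, norm_nonneg a]
    linarith [norm_sub_norm_le a w, norm_sub_rev a w]
  have hu_pos : 0 < ‖u‖ := norm_pos_iff.mpr hu₀
  rw [norm_div, norm_one, norm_mul, Real.rpow_neg_one, div_le_iff₀ (by positivity)]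
  field_simp
  nlinarith

theorem eLpNorm_one_div_mul_cpow_one_half_sub_le {p : ℝ} (hp₁ : 1 ≤ p) (hp₂ : p < 2) (R M : ℝ) :
    ∃ K : ℝ, 0 ≤ K ∧ ∀ a : ℂ, a ≠ 0 → ‖a‖ ^ 2 ≤ M →
      eLpNorm (fun u : ℂ ↦ 1 / (u * (u ^ (1 / 2 : ℂ) - a))) (ENNReal.ofReal p)
          (volume.restrict (ball 0 R)) ≤ ENNReal.ofReal (K * ‖a‖ ^ (2 / p - 2)) := by
  have hd : (finrank ℝ ℂ : ℝ) = 2 := by simp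
  have hp₀ : 0 < p := by linarith
  have hinv : 1 / p ≤ 1 := by rw [div_le_one hp₀]; exact hp₁
  have hmul : p * (1 / p) = 1 := by field_simp
  obtain ⟨K₁, hK₁, h₁⟩ := eLpNorm_norm_rpow_neg_mul_norm_sub_rpow_neg_le_of_norm_le volume
    (α := 1 / 2) (β := 1) (q := 1 - 1 / p) hp₀ (by norm_num) (by rw [hd]; linarith) zero_le_one
    (by rw [hd]; linarith) (by linarith) (by rw [hd]; nlinarith) R M
  obtain ⟨K₂, hK₂, h₂⟩ := eLpNorm_norm_rpow_neg_mul_norm_sub_rpow_neg_le_of_norm_le volume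
    (α := 1) (β := 1) (q := 3 / 2 - 1 / p) hp₀ zero_le_one (by rw [hd]; linarith) zero_le_one
    (by rw [hd]; linarith) (by linarith) (by rw [hd]; nlinarith) R M
  refine ⟨K₁ + K₂, by positivity, fun a ha haM ↦ ?_⟩
  have hc : a ^ 2 ≠ 0 := pow_ne_zero 2 ha
  have hcM : ‖a ^ 2‖ ≤ M := by rwa [norm_pow]
  have hsq : ∀ z : ℝ, ‖a ^ 2‖ ^ z = ‖a‖ ^ (2 * z) := fun z ↦ by
    rw [norm_pow, ← Real.rpow_two, ← Real.rpow_mul (norm_nonneg a)]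
  set g₁ := fun u : ℂ ↦ ‖u‖ ^ (-(1 / 2 : ℝ)) * ‖u - a ^ 2‖ ^ (-1 : ℝ)
  set g₂ := fun u : ℂ ↦ ‖u‖ ^ (-1 : ℝ) * ‖u - a ^ 2‖ ^ (-1 : ℝ)
  have hg₁ : AEStronglyMeasurable g₁ (volume.restrict (ball 0 R)) :=
    (by fun_prop : Measurable g₁).aestronglyMeasurable
  have hg₂ : AEStronglyMeasurable (‖a‖ • g₂) (volume.restrict (ball 0 R)) :=
    (by fun_prop : Measurable (‖a‖ • g₂)).aestronglyMeasurable
  calc eLpNorm (fun u : ℂ ↦ 1 / (u * (u ^ (1 / 2 : ℂ) - a))) (ENNReal.ofReal p)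
        (volume.restrict (ball 0 R))
      ≤ eLpNorm (g₁ + ‖a‖ • g₂) (ENNReal.ofReal p) (volume.restrict (ball 0 R)) := by
        refine eLpNorm_mono_ae ?_
        filter_upwards [ae_restrict_of_ae (Measure.ae_ne volume (a ^ 2))] with u hu
        rw [Real.norm_of_nonneg (by simp only [g₁, g₂, Pi.add_apply, Pi.smul_apply]; positivity)]
        exact norm_one_div_mul_cpow_one_half_sub_le hu
    _ ≤ eLpNorm g₁ (ENNReal.ofReal p) (volume.restrict (ball 0 R)) +
          ‖‖a‖‖ₑ * eLpNorm g₂ (ENNReal.ofReal p) (volume.restrict (ball 0 R)) := by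
        rw [← eLpNorm_const_smul]
        exact eLpNorm_add_le hg₁ hg₂ (by simpa using hp₁)
    _ ≤ ENNReal.ofReal (K₁ * ‖a ^ 2‖ ^ (-(1 - 1 / p))) +
          ENNReal.ofReal ‖a‖ * ENNReal.ofReal (K₂ * ‖a ^ 2‖ ^ (-(3 / 2 - 1 / p))) := by
        rw [Real.enorm_eq_ofReal (norm_nonneg a)]
        gcongr
        exacts [h₁ _ hc hcM, h₂ _ hc hcM]
    _ = ENNReal.ofReal ((K₁ + K₂) * ‖a‖ ^ (2 / p - 2)) := by
        have hexp₁ : ‖a ^ 2‖ ^ (-(1 - 1 / p)) = ‖a‖ ^ (2 / p - 2) := by rw [hsq]; ring_nf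
        have hexp₂ : ‖a‖ * ‖a ^ 2‖ ^ (-(3 / 2 - 1 / p)) = ‖a‖ ^ (2 / p - 2) := by
          rw [hsq, show 2 / p - 2 = 1 + 2 * -(3 / 2 - 1 / p) by ring,
            Real.rpow_add (norm_pos_iff.mpr ha), Real.rpow_one]
        rw [← ENNReal.ofReal_mul (norm_nonneg a), ← ENNReal.ofReal_add (by positivity)
          (by positivity), mul_left_comm ‖a‖, hexp₁, hexp₂, add_mul]

theorem eLpNorm_one_div_mul_cpow_one_half_sub_le_of_large {p : ℝ} (hp₀ : 0 < p) (hp₂ : p < 2)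
    (R : ℝ) :
    ∃ N : ℝ, 0 ≤ N ∧ ∀ a : ℂ, 4 * R ≤ ‖a‖ ^ 2 → 1 ≤ ‖a‖ →
      eLpNorm (fun u : ℂ ↦ 1 / (u * (u ^ (1 / 2 : ℂ) - a))) (ENNReal.ofReal p)
          (volume.restrict (ball 0 R)) ≤ ENNReal.ofReal N := by
  set g := fun u : ℂ ↦ ‖u‖ ^ (-1 : ℝ)
  set G := eLpNorm g (ENNReal.ofReal p) (volume.restrict (ball 0 R))
  have hG : G < ⊤ := eLpNorm_norm_rpow_neg_lt_top volume hp₀ (by simp; linarith) R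
  refine ⟨2 * G.toReal, by positivity, fun a haR ha ↦ ?_⟩
  calc eLpNorm (fun u : ℂ ↦ 1 / (u * (u ^ (1 / 2 : ℂ) - a))) (ENNReal.ofReal p)
        (volume.restrict (ball 0 R))
      ≤ eLpNorm ((2 : ℝ) • g) (ENNReal.ofReal p) (volume.restrict (ball 0 R)) := by
        refine eLpNorm_mono_ae ?_
        filter_upwards [ae_restrict_mem measurableSet_ball] with u hu
        rw [Pi.smul_apply, smul_eq_mul, Real.norm_of_nonneg (by positivity)]
        exact norm_one_div_mul_cpow_one_half_sub_le_of_large (mem_ball_zero_iff.mp hu) haR ha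
    _ = ENNReal.ofReal (2 * G.toReal) := by
        rw [eLpNorm_const_smul, ENNReal.ofReal_mul zero_le_two, ENNReal.ofReal_toReal hG.ne,
          Real.enorm_eq_ofReal zero_le_two]

end Complex

/-- For every `p` with `1 ≤ p < 2` there exists `δ = δ(p) > 0` such that
for every `R > 0` there is a constant `C = C(p,R) > 0` with: for every `a ∈ ℂ`, `a ≠ 0`,
the `L^p` norm of `u ↦ 1/(u(√u − a))` over the disk `{|u| < R}` (planar Lebesgue measure)
is at most `C (1 + |a|^{-1+δ})`.  Here `√u = u^(1/2)` is the principal branch. -/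
theorem lemma_2210A_general :
    ∀ p : ℝ, 1 ≤ p → p < 2 →
      ∃ δ : ℝ, 0 < δ ∧
        ∀ R : ℝ, 0 < R →
          ∃ C : ℝ, 0 < C ∧
            ∀ a : ℂ, a ≠ 0 →
              eLpNorm (fun u : ℂ => 1 / (u * (u ^ (1/2 : ℂ) - a)))
                  (ENNReal.ofReal p) (volume.restrict {u : ℂ | ‖u‖ < R})
                ≤ ENNReal.ofReal (C * (1 + ‖a‖ ^ (-1 + δ))) := by
  intro p hp₁ hp₂
  refine ⟨2 / p - 1, by rw [sub_pos, lt_div_iff₀ (by linarith)]; linarith, fun R _ ↦ ?_⟩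
  obtain ⟨K, hK, hsmall⟩ :=
    Complex.eLpNorm_one_div_mul_cpow_one_half_sub_le hp₁ hp₂ R (max (4 * R) 1)
  obtain ⟨N, hN, hlarge⟩ := Complex.eLpNorm_one_div_mul_cpow_one_half_sub_le_of_large
    (by linarith) hp₂ R
  refine ⟨K + N + 1, by positivity, fun a ha ↦ ?_⟩
  rw [← ball_zero_eq, show -1 + (2 / p - 1) = 2 / p - 2 by ring]
  have hpow : 0 ≤ ‖a‖ ^ (2 / p - 2) := by positivity
  rcases le_or_gt (‖a‖ ^ 2) (max (4 * R) 1) with hM | hM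
  · refine (hsmall a ha hM).trans (ENNReal.ofReal_le_ofReal ?_)
    nlinarith
  · have h4R : 4 * R ≤ ‖a‖ ^ 2 := (le_max_left _ _).trans hM.le
    have h1 : 1 ≤ ‖a‖ := by nlinarith [le_max_right (4 * R) 1, norm_nonneg a]
    refine (hlarge a h4R h1).trans (ENNReal.ofReal_le_ofReal ?_)
    nlinarith
end AddHaar
end

section
/- For p = 4/3 and every R > 0 there is a constant C = C(R) > 0 such that for every a ∈ ℂ with a ≠ 0, ‖u ↦ 1/(u(√u − a))‖_{L^{4/3}({u ∈ ℂ : |u| < R})} ≤ C(1 + |ln |a||^{3/4}). -/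
/-!
Substituting `u = w ^ 2` with `0 < re w` (Jacobian `4 ‖w‖ ^ 2`, and `√(w ^ 2) = w`) bounds
`∫_{‖u‖ < R} ‖f u‖ ^ (4/3)` by `4 ∫_{‖w‖ < √R} ‖w‖ ^ (-2/3) ‖w - a‖ ^ (-4/3)`, a kernel whose
exponents add up to the dimension `2`. Split the disk at `‖w‖ = ‖a‖ / 2` and `‖w‖ = 2 ‖a‖`: on
the two inner pieces only one factor is singular, with exponent `< 2`, and by scaling each piece
is bounded independently of `a`; on the outer annulus the kernel is at most `2 ^ (4/3) ‖w‖ ^ (-2)`,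
whose integral is `2π log (√R / (2 ‖a‖))`. Radial integrals are computed in polar coordinates.
-/

open MeasureTheory Complex Metric Set Real
open scoped ENNReal

theorem lintegral_comp_norm_sub (c : ℂ) {g : ℝ → ℝ≥0∞} (hg : Measurable g) :
    ∫⁻ z, g ‖z - c‖ = 2 * ENNReal.ofReal π * ∫⁻ r in Ioi 0, ENNReal.ofReal r * g r := by
  have hprod := lintegral_prod_mul (μ := volume.restrict (Ioi (0 : ℝ)))
    (ν := volume.restrict (Ioo (-π) π)) (f := fun r => ENNReal.ofReal r * g r)
    (g := fun _ => 1) (by fun_prop) aemeasurable_const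
  simp only [mul_one, lintegral_const, Measure.restrict_apply_univ, Real.volume_Ioo,
    Measure.prod_restrict, ← Measure.volume_eq_prod] at hprod
  rw [lintegral_sub_right_eq_self (fun z => g ‖z‖) c, ← Complex.lintegral_comp_polarCoord_symm,
    polarCoord_target, setLIntegral_congr_fun (measurableSet_Ioi.prod measurableSet_Ioo)
      fun p hp => by rw [Complex.norm_polarCoord_symm, abs_of_pos hp.1, smul_eq_mul], hprod,
    mul_comm, show π - -π = 2 * π by ring, ENNReal.ofReal_mul zero_le_two, ENNReal.ofReal_ofNat,
    one_mul]

theorem setLIntegral_comp_norm_sub (c : ℂ) {g : ℝ → ℝ≥0∞} (hg : Measurable g) {s : Set ℝ}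
    (hs : MeasurableSet s) :
    ∫⁻ z in (‖· - c‖) ⁻¹' s, g ‖z - c‖ =
      2 * ENNReal.ofReal π * ∫⁻ r in s ∩ Ioi 0, ENNReal.ofReal r * g r := by
  have hpre : MeasurableSet ((‖· - c‖) ⁻¹' s) := (by fun_prop : Measurable (‖· - c‖)) hs
  calc ∫⁻ z in (‖· - c‖) ⁻¹' s, g ‖z - c‖ = ∫⁻ z, s.indicator g ‖z - c‖ :=
        (lintegral_indicator hpre _).symm
    _ = 2 * ENNReal.ofReal π * ∫⁻ r in Ioi 0, s.indicator (fun r => ENNReal.ofReal r * g r) r := by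
        simp_rw [lintegral_comp_norm_sub c (hg.indicator hs), indicator_mul_right]
    _ = _ := by rw [lintegral_indicator hs, Measure.restrict_restrict hs]

theorem lintegral_Ioo_zero_rpow {s m : ℝ} (hs : -1 < s) (hm : 0 ≤ m) :
    ∫⁻ r in Ioo 0 m, ENNReal.ofReal (r ^ s) = ENNReal.ofReal (m ^ (s + 1) / (s + 1)) := by
  have hint : IntegrableOn (· ^ s) (Ioc 0 m) :=
    (intervalIntegrable_iff_integrableOn_Ioc_of_le hm).1
      (intervalIntegral.intervalIntegrable_rpow' hs)
  rw [Measure.restrict_congr_set Ioo_ae_eq_Ioc, ← ofReal_integral_eq_lintegral_ofReal hint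
    ((ae_restrict_iff' measurableSet_Ioc).2 (.of_forall fun r hr => Real.rpow_nonneg hr.1.le s)),
    ← intervalIntegral.integral_of_le hm, integral_rpow (.inl hs),
    Real.zero_rpow (by linarith), sub_zero]

theorem lintegral_Ioo_inv {ε ρ : ℝ} (hε : 0 < ε) (hρ : 0 < ρ) :
    ∫⁻ r in Ioo ε ρ, ENNReal.ofReal r⁻¹ = ENNReal.ofReal (Real.log (ρ / ε)) := by
  rcases le_or_gt ε ρ with hερ | hρε
  · have hint : IntegrableOn (·⁻¹) (Ioc ε ρ) :=
      (intervalIntegrable_iff_integrableOn_Ioc_of_le hερ).1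
        (intervalIntegrable_inv_iff.2 (.inr (notMem_uIcc_of_lt hε hρ)))
    rw [Measure.restrict_congr_set Ioo_ae_eq_Ioc, ← ofReal_integral_eq_lintegral_ofReal hint
      ((ae_restrict_iff' measurableSet_Ioc).2
        (.of_forall fun r hr => inv_nonneg.2 (hε.trans hr.1).le)),
      ← intervalIntegral.integral_of_le hερ, integral_inv_of_pos hε hρ]
  · rw [Ioo_eq_empty_of_le hρε.le, Measure.restrict_empty, lintegral_zero_measure, eq_comm,
      ENNReal.ofReal_eq_zero]
    exact Real.log_nonpos (by positivity) ((div_le_one hε).2 hρε.le)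

theorem lintegral_ball_enorm_sub_rpow_neg (c : ℂ) {p m : ℝ} (hp : p < 2) (hm : 0 ≤ m) :
    ∫⁻ z in ball c m, ‖z - c‖ₑ ^ (-p) = ENNReal.ofReal (2 * π * (m ^ (2 - p) / (2 - p))) := by
  have hball : ball c m = (‖· - c‖) ⁻¹' Iio m := by ext z; simp [dist_eq_norm]
  have hradial : ∀ r ∈ Ioo 0 m,
      ENNReal.ofReal r * ENNReal.ofReal r ^ (-p) = ENNReal.ofReal (r ^ (1 - p)) := fun r hr => by
    rw [ENNReal.ofReal_rpow_of_pos hr.1, ← ENNReal.ofReal_mul hr.1.le, sub_eq_add_neg,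
      Real.rpow_add hr.1, Real.rpow_one]
  simp_rw [hball, ← ofReal_norm]
  rw [setLIntegral_comp_norm_sub c (g := fun r => ENNReal.ofReal r ^ (-p)) (by fun_prop)
    measurableSet_Iio, Iio_inter_Ioi, setLIntegral_congr_fun measurableSet_Ioo hradial,
    lintegral_Ioo_zero_rpow (by linarith) hm, ← ENNReal.ofReal_ofNat 2,
    ← ENNReal.ofReal_mul zero_le_two, ← ENNReal.ofReal_mul (by positivity)]
  ring_nf

theorem lintegral_annulus_enorm_rpow_neg_two {ε ρ : ℝ} (hε : 0 < ε) (hρ : 0 < ρ) :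
    ∫⁻ z : ℂ in (‖·‖) ⁻¹' Ioo ε ρ, ‖z‖ₑ ^ (-2 : ℝ) =
      ENNReal.ofReal (2 * π * Real.log (ρ / ε)) := by
  have hradial : ∀ r ∈ Ioo ε ρ,
      ENNReal.ofReal r * ENNReal.ofReal r ^ (-2 : ℝ) = ENNReal.ofReal r⁻¹ := fun r hr => by
    have hr0 : 0 < r := hε.trans hr.1
    rw [ENNReal.ofReal_rpow_of_pos hr0, ← ENNReal.ofReal_mul hr0.le, Real.rpow_neg_ofNat]
    field_simp
  have h := setLIntegral_comp_norm_sub 0 (g := fun r => ENNReal.ofReal r ^ (-2 : ℝ)) (by fun_prop)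
    measurableSet_Ioo (s := Ioo ε ρ)
  simp only [sub_zero, ofReal_norm] at h
  rw [h, Ioo_inter_Ioi, max_eq_left hε.le, setLIntegral_congr_fun measurableSet_Ioo hradial,
    lintegral_Ioo_inv hε hρ, ← ENNReal.ofReal_ofNat 2,
    ← ENNReal.ofReal_mul zero_le_two, ← ENNReal.ofReal_mul (by positivity)]

theorem enorm_rpow_neg_le {E : Type*} [SeminormedAddCommGroup E] {z : E} {b r : ℝ} (hb : 0 < b)
    (hbz : b ≤ ‖z‖) (hr : 0 ≤ r) : ‖z‖ₑ ^ (-r) ≤ ENNReal.ofReal (b ^ (-r)) := by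
  rw [← ofReal_norm, ← ENNReal.ofReal_rpow_of_pos hb, ENNReal.rpow_neg, ENNReal.rpow_neg]
  exact ENNReal.inv_le_inv.2 (ENNReal.rpow_le_rpow (ENNReal.ofReal_le_ofReal hbz) hr)

noncomputable def twoPointKernel (α β : ℝ) (a w : ℂ) : ℝ≥0∞ := ‖w‖ₑ ^ (-α) * ‖w - a‖ₑ ^ (-β)

section twoPointKernel

variable {α β : ℝ} {a : ℂ}

theorem setLIntegral_twoPointKernel_ball_le (hβ : 0 < β) (hαβ : α + β = 2) (ha : a ≠ 0) :
    ∫⁻ w in ball 0 (‖a‖ / 2), twoPointKernel α β a w ≤ ENNReal.ofReal (2 * π / β) := by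
  have ht : 0 < ‖a‖ / 2 := by positivity
  have hpt : ∀ w ∈ ball (0 : ℂ) (‖a‖ / 2),
      twoPointKernel α β a w ≤ ENNReal.ofReal ((‖a‖ / 2) ^ (-β)) * ‖w - 0‖ₑ ^ (-α) := by
    intro w hw
    rw [mem_ball_zero_iff] at hw
    rw [twoPointKernel, sub_zero, mul_comm]
    gcongr
    refine enorm_rpow_neg_le ht ?_ hβ.le
    linarith [norm_sub_norm_le a w, norm_sub_rev a w]
  calc ∫⁻ w in ball 0 (‖a‖ / 2), twoPointKernel α β a w
      ≤ ∫⁻ w in ball 0 (‖a‖ / 2), ENNReal.ofReal ((‖a‖ / 2) ^ (-β)) * ‖w - 0‖ₑ ^ (-α) :=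
        setLIntegral_mono' measurableSet_ball hpt
    _ = ENNReal.ofReal ((‖a‖ / 2) ^ (-β) * (2 * π * ((‖a‖ / 2) ^ (2 - α) / (2 - α)))) := by
        rw [lintegral_const_mul' _ _ ENNReal.ofReal_ne_top,
          lintegral_ball_enorm_sub_rpow_neg 0 (by linarith) ht.le,
          ← ENNReal.ofReal_mul (by positivity)]
    _ = ENNReal.ofReal (2 * π / β) := by
        have h2α : 2 - α = β := by linarith
        rw [h2α, Real.rpow_neg ht.le]
        field_simp

theorem setLIntegral_twoPointKernel_Icc_le (hα : 0 < α) (hαβ : α + β = 2) (ha : a ≠ 0) :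
    ∫⁻ w in (‖·‖) ⁻¹' Icc (‖a‖ / 2) (2 * ‖a‖), twoPointKernel α β a w ≤
      ENNReal.ofReal (2 * π * 8 ^ α / α) := by
  have ht : 0 < ‖a‖ := norm_pos_iff.2 ha
  have hpt : ∀ w ∈ (‖·‖) ⁻¹' Icc (‖a‖ / 2) (2 * ‖a‖),
      twoPointKernel α β a w ≤ ENNReal.ofReal ((‖a‖ / 2) ^ (-α)) * ‖w - a‖ₑ ^ (-β) := by
    intro w hw
    rw [twoPointKernel]
    gcongr
    exact enorm_rpow_neg_le (by positivity) hw.1 hα.le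
  have hsub : (‖·‖) ⁻¹' Icc (‖a‖ / 2) (2 * ‖a‖) ⊆ ball a (4 * ‖a‖) := fun w hw => by
    rw [mem_ball, dist_eq_norm]
    linarith [norm_sub_le w a, hw.2]
  calc ∫⁻ w in (‖·‖) ⁻¹' Icc (‖a‖ / 2) (2 * ‖a‖), twoPointKernel α β a w
      ≤ ∫⁻ w in (‖·‖) ⁻¹' Icc (‖a‖ / 2) (2 * ‖a‖),
          ENNReal.ofReal ((‖a‖ / 2) ^ (-α)) * ‖w - a‖ₑ ^ (-β) :=
        setLIntegral_mono' (measurableSet_Icc.preimage measurable_norm) hpt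
    _ ≤ ∫⁻ w in ball a (4 * ‖a‖), ENNReal.ofReal ((‖a‖ / 2) ^ (-α)) * ‖w - a‖ₑ ^ (-β) :=
        lintegral_mono_set hsub
    _ = ENNReal.ofReal ((‖a‖ / 2) ^ (-α) * (2 * π * ((4 * ‖a‖) ^ (2 - β) / (2 - β)))) := by
        rw [lintegral_const_mul' _ _ ENNReal.ofReal_ne_top,
          lintegral_ball_enorm_sub_rpow_neg a (by linarith) (by positivity),
          ← ENNReal.ofReal_mul (by positivity)]
    _ = ENNReal.ofReal (2 * π * 8 ^ α / α) := by
        have h8 : (‖a‖ / 2) ^ (-α) * (4 * ‖a‖) ^ α = 8 ^ α := by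
          rw [Real.rpow_neg (by positivity), ← div_eq_inv_mul, ← Real.div_rpow (by positivity)
            (by positivity), show 4 * ‖a‖ / (‖a‖ / 2) = 8 by field_simp; norm_num]
        rw [show 2 - β = α by linarith, ← h8]
        ring_nf

theorem setLIntegral_twoPointKernel_Ioo_le (hβ : 0 ≤ β) (hαβ : α + β = 2) (ha : a ≠ 0) {ρ : ℝ}
    (hρ : 0 < ρ) :
    ∫⁻ w in (‖·‖) ⁻¹' Ioo (2 * ‖a‖) ρ, twoPointKernel α β a w ≤
      ENNReal.ofReal (2 ^ β * (2 * π * Real.log (ρ / (2 * ‖a‖)))) := by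
  have ht : 0 < ‖a‖ := norm_pos_iff.2 ha
  have hpt : ∀ w ∈ (‖·‖) ⁻¹' Ioo (2 * ‖a‖) ρ,
      twoPointKernel α β a w ≤ ENNReal.ofReal (2 ^ β) * ‖w‖ₑ ^ (-2 : ℝ) := by
    intro w hw
    have hw0 : 0 < ‖w‖ := by linarith [hw.1]
    have hfar : ‖w‖ / 2 ≤ ‖w - a‖ := by linarith [norm_sub_norm_le w a, hw.1]
    rw [twoPointKernel, ← ofReal_norm w, ENNReal.ofReal_rpow_of_pos hw0,
      ENNReal.ofReal_rpow_of_pos hw0, ← ENNReal.ofReal_mul (by positivity)]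
    calc ENNReal.ofReal (‖w‖ ^ (-α)) * ‖w - a‖ₑ ^ (-β)
        ≤ ENNReal.ofReal (‖w‖ ^ (-α)) * ENNReal.ofReal ((‖w‖ / 2) ^ (-β)) := by
          gcongr
          exact enorm_rpow_neg_le (by positivity) hfar hβ
      _ = ENNReal.ofReal (2 ^ β * ‖w‖ ^ (-2 : ℝ)) := by
          rw [← ENNReal.ofReal_mul (by positivity), Real.div_rpow hw0.le zero_le_two,
            Real.rpow_neg zero_le_two, ← hαβ, neg_add, Real.rpow_add hw0]
          field_simp
  calc ∫⁻ w in (‖·‖) ⁻¹' Ioo (2 * ‖a‖) ρ, twoPointKernel α β a w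
      ≤ ∫⁻ w in (‖·‖) ⁻¹' Ioo (2 * ‖a‖) ρ, ENNReal.ofReal (2 ^ β) * ‖w‖ₑ ^ (-2 : ℝ) :=
        setLIntegral_mono' (measurableSet_Ioo.preimage measurable_norm) hpt
    _ = _ := by
        rw [lintegral_const_mul' _ _ ENNReal.ofReal_ne_top,
          lintegral_annulus_enorm_rpow_neg_two (by positivity) hρ,
          ← ENNReal.ofReal_mul (by positivity)]


theorem exists_setLIntegral_ball_twoPointKernel_le (hα : 0 < α) (hβ : 0 < β) (hαβ : α + β = 2)
    {ρ : ℝ} (hρ : 0 < ρ) :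
    ∃ K : ℝ, 0 < K ∧ ∀ a : ℂ, a ≠ 0 →
      ∫⁻ w in ball 0 ρ, twoPointKernel α β a w ≤ ENNReal.ofReal (K * (1 + |Real.log ‖a‖|)) := by
  set c₁ := 2 * π / β
  set c₂ := 2 * π * 8 ^ α / α
  set c₃ := 2 ^ β * (2 * π)
  have hc₁ : 0 < c₁ := by positivity
  have hc₂ : 0 < c₂ := by positivity
  have hc₃ : 0 < c₃ := by positivity
  refine ⟨c₁ + c₂ + c₃ * (|Real.log ρ| + 1), by positivity, fun a ha => ?_⟩
  have ht : 0 < ‖a‖ := norm_pos_iff.2 ha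
  have hcover : ball (0 : ℂ) ρ ⊆ ball 0 (‖a‖ / 2) ∪ (‖·‖) ⁻¹' Icc (‖a‖ / 2) (2 * ‖a‖) ∪
      (‖·‖) ⁻¹' Ioo (2 * ‖a‖) ρ := fun w hw => by
    rw [mem_ball_zero_iff] at hw
    rcases lt_or_ge ‖w‖ (‖a‖ / 2) with h₁ | h₁
    · exact .inl (.inl (mem_ball_zero_iff.2 h₁))
    rcases le_or_gt ‖w‖ (2 * ‖a‖) with h₂ | h₂
    exacts [.inl (.inr ⟨h₁, h₂⟩), .inr ⟨h₂, hw⟩]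
  have hlog : Real.log (ρ / (2 * ‖a‖)) ≤ |Real.log ρ| + |Real.log ‖a‖| := by
    rw [Real.log_div hρ.ne' (by positivity), Real.log_mul two_ne_zero ht.ne']
    linarith [le_abs_self (Real.log ρ), neg_abs_le (Real.log ‖a‖), Real.log_pos one_lt_two]
  have habs := abs_nonneg (Real.log ‖a‖)
  calc ∫⁻ w in ball 0 ρ, twoPointKernel α β a w
      ≤ (∫⁻ w in ball 0 (‖a‖ / 2), twoPointKernel α β a w)
          + (∫⁻ w in (‖·‖) ⁻¹' Icc (‖a‖ / 2) (2 * ‖a‖), twoPointKernel α β a w)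
          + ∫⁻ w in (‖·‖) ⁻¹' Ioo (2 * ‖a‖) ρ, twoPointKernel α β a w :=
        (lintegral_mono_set hcover).trans <| (lintegral_union_le _ _ _).trans <|
          add_le_add (lintegral_union_le _ _ _) le_rfl
    _ ≤ ENNReal.ofReal c₁ + ENNReal.ofReal c₂
          + ENNReal.ofReal (c₃ * (|Real.log ρ| + |Real.log ‖a‖|)) := by
        gcongr
        · exact setLIntegral_twoPointKernel_ball_le hβ hαβ ha
        · exact setLIntegral_twoPointKernel_Icc_le hα hαβ ha
        · refine (setLIntegral_twoPointKernel_Ioo_le hβ.le hαβ ha hρ).trans ?_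
          rw [← mul_assoc]
          gcongr
    _ ≤ ENNReal.ofReal ((c₁ + c₂ + c₃ * (|Real.log ρ| + 1)) * (1 + |Real.log ‖a‖|)) := by
        rw [← ENNReal.ofReal_add hc₁.le hc₂.le,
          ← ENNReal.ofReal_add (by positivity) (by positivity)]
        gcongr
        nlinarith [mul_nonneg (add_nonneg (add_nonneg hc₁.le hc₂.le)
          (mul_nonneg hc₃.le (abs_nonneg (Real.log ρ)))) habs]

end twoPointKernel

theorem det_restrictScalars_toSpanSingleton (c : ℂ) :
    ((ContinuousLinearMap.toSpanSingleton ℂ c).restrictScalars ℝ).det = ‖c‖ ^ 2 := by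
  simp [ContinuousLinearMap.det, LinearMap.det_restrictScalars, Algebra.norm_complex_eq,
    Complex.normSq_eq_norm_sq]

theorem slitPlane_ae_eq_univ : (slitPlane : Set ℂ) =ᵐ[volume] univ :=
  Complex.volume_preserving_equiv_real_prod.quasiMeasurePreserving.preimage_ae_eq
    polarCoord_source_ae_eq_univ

theorem re_cpow_inv_two_pos {u : ℂ} (hu : u ∈ slitPlane) : 0 < (u ^ (2⁻¹ : ℂ)).re := by
  rw [Complex.cpow_inv_two_re, Real.sqrt_pos]
  rcases Complex.mem_slitPlane_iff.1 hu with h | h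
  · linarith [norm_nonneg u]
  · linarith [neg_abs_le u.re, Complex.abs_re_lt_norm.2 h]

theorem sq_image_rightHalfPlane_ae_eq (s : Set ℂ) :
    (· ^ 2) '' ({w : ℂ | 0 < w.re} ∩ (· ^ 2) ⁻¹' s) =ᵐ[volume] s := by
  refine ae_eq_set.2 ⟨?_, ?_⟩
  · rw [sdiff_eq_empty.2 (image_preimage_subset _ s |>.trans' (image_mono inter_subset_right))]
    exact measure_empty
  · refine measure_mono_null (t := slitPlaneᶜ) (fun u hu hslit => hu.2 ⟨u ^ (2⁻¹ : ℂ), ?_, ?_⟩)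
      (ae_eq_univ.1 slitPlane_ae_eq_univ)
    exacts [⟨re_cpow_inv_two_pos hslit, by simpa [cpow_ofNat_inv_pow] using hu.1⟩,
      cpow_ofNat_inv_pow u 2]

theorem setLIntegral_eq_setLIntegral_sq {s : Set ℂ} (hs : MeasurableSet s) (g : ℂ → ℝ≥0∞) :
    ∫⁻ u in s, g u = ∫⁻ w in {w : ℂ | 0 < w.re} ∩ (· ^ 2) ⁻¹' s, 4 * ‖w‖ₑ ^ 2 * g (w ^ 2) := by
  set S := {w : ℂ | 0 < w.re} ∩ (· ^ 2) ⁻¹' s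
  have hS : MeasurableSet S := (measurableSet_lt measurable_const Complex.measurable_re).inter
    ((by fun_prop : Measurable (· ^ 2 : ℂ → ℂ)) hs)
  have hderiv : ∀ w ∈ S, HasFDerivWithinAt (· ^ 2)
      ((ContinuousLinearMap.toSpanSingleton ℂ (2 * w)).restrictScalars ℝ) S w := fun w _ =>
    ((hasDerivAt_pow 2 w).congr_deriv (by norm_num)).hasFDerivAt.restrictScalars ℝ
      |>.hasFDerivWithinAt
  have hinj : InjOn (· ^ 2) S := fun x hx y hy hxy => by
    rw [← sq_cpow_two_inv hx.1, ← sq_cpow_two_inv hy.1]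
    exact congrArg (· ^ (2⁻¹ : ℂ)) hxy
  rw [← setLIntegral_congr (sq_image_rightHalfPlane_ae_eq s),
    lintegral_image_eq_lintegral_abs_det_fderiv_mul volume hS hderiv hinj]
  refine setLIntegral_congr_fun hS fun w _ => ?_
  rw [det_restrictScalars_toSpanSingleton, abs_of_nonneg (by positivity), norm_mul,
    Complex.norm_two, mul_pow, ENNReal.ofReal_mul (by positivity), ← ofReal_norm,
    ENNReal.ofReal_pow (norm_nonneg w)]
  norm_num

theorem enorm_sq_mul_enorm_inv_rpow_le (a w : ℂ) :
    ‖w‖ₑ ^ 2 * ‖(w ^ 2 * (w - a))⁻¹‖ₑ ^ (4 / 3 : ℝ) ≤ twoPointKernel (2 / 3) (4 / 3) a w := by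
  rcases eq_or_ne w 0 with rfl | hw
  · simp
  rcases eq_or_ne (w - a) 0 with hwa | hwa
  · simp [hwa]
  have hw' : ‖w‖ₑ ≠ 0 := enorm_ne_zero.2 hw
  rw [enorm_inv (mul_ne_zero (pow_ne_zero 2 hw) hwa), enorm_mul, enorm_pow, ← ENNReal.rpow_natCast,
    ENNReal.inv_rpow, ← ENNReal.rpow_neg, ENNReal.mul_rpow_of_ne_top (by simp) (by simp),
    ← ENNReal.rpow_mul, ← mul_assoc, ← ENNReal.rpow_add _ _ hw' enorm_ne_top, twoPointKernel]
  norm_num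

theorem setLIntegral_enorm_inv_mul_sqrt_sub_rpow_le (a : ℂ) {R : ℝ} :
    ∫⁻ u in {u : ℂ | ‖u‖ < R}, ‖1 / (u * (u ^ (1 / 2 : ℂ) - a))‖ₑ ^ (4 / 3 : ℝ) ≤
      4 * ∫⁻ w in ball 0 √R, twoPointKernel (2 / 3) (4 / 3) a w := by
  set S := {w : ℂ | 0 < w.re} ∩ (· ^ 2) ⁻¹' {u : ℂ | ‖u‖ < R}
  have hS : MeasurableSet S := (measurableSet_lt measurable_const Complex.measurable_re).inter
    ((measurableSet_lt measurable_norm measurable_const).preimage (by fun_prop))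
  have hsub : S ⊆ ball 0 √R := fun w hw => by
    rw [mem_ball_zero_iff]
    exact Real.lt_sqrt (norm_nonneg w) |>.2 (by simpa using hw.2)
  have hpt : ∀ w ∈ S, 4 * ‖w‖ₑ ^ 2 * ‖1 / (w ^ 2 * ((w ^ 2) ^ (1 / 2 : ℂ) - a))‖ₑ ^ (4 / 3 : ℝ) ≤
      4 * twoPointKernel (2 / 3) (4 / 3) a w := fun w hw => by
    rw [one_div (2 : ℂ), sq_cpow_two_inv hw.1, one_div, mul_assoc]
    gcongr
    exact enorm_sq_mul_enorm_inv_rpow_le a w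
  calc _ = ∫⁻ w in S, 4 * ‖w‖ₑ ^ 2 * ‖1 / (w ^ 2 * ((w ^ 2) ^ (1 / 2 : ℂ) - a))‖ₑ ^ (4 / 3 : ℝ) :=
        setLIntegral_eq_setLIntegral_sq (measurableSet_lt measurable_norm measurable_const) _
    _ ≤ ∫⁻ w in S, 4 * twoPointKernel (2 / 3) (4 / 3) a w := setLIntegral_mono' hS hpt
    _ ≤ ∫⁻ w in ball 0 √R, 4 * twoPointKernel (2 / 3) (4 / 3) a w := lintegral_mono_set hsub
    _ = _ := lintegral_const_mul' _ _ (by norm_num)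

/-- For `p = 4/3` and every `R > 0` there is a constant `C = C(R) > 0` such
that for every `a ∈ ℂ` with `a ≠ 0`, the `L^{4/3}` norm of `u ↦ 1/(u(√u − a))` over the disk
`{|u| < R}` is at most `C (1 + |ln |a||^{3/4})`. -/
theorem lemma_2210A_critical_p :
    ∀ R : ℝ, 0 < R →
      ∃ C : ℝ, 0 < C ∧
        ∀ a : ℂ, a ≠ 0 →
          eLpNorm (fun u : ℂ => 1 / (u * (u ^ (1/2 : ℂ) - a)))
              (ENNReal.ofReal (4/3)) (volume.restrict {u : ℂ | ‖u‖ < R})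
            ≤ ENNReal.ofReal (C * (1 + |Real.log ‖a‖| ^ (3/4 : ℝ))) := by
  intro R hR
  obtain ⟨K, hK, hKest⟩ := exists_setLIntegral_ball_twoPointKernel_le (α := 2 / 3) (β := 4 / 3)
    (by norm_num) (by norm_num) (by norm_num) (Real.sqrt_pos.2 hR)
  refine ⟨(4 * K) ^ (3 / 4 : ℝ), by positivity, fun a ha => ?_⟩
  set x := |Real.log ‖a‖|
  have hx : 0 ≤ x := abs_nonneg _
  have hint : ∫⁻ u in {u : ℂ | ‖u‖ < R}, ‖1 / (u * (u ^ (1 / 2 : ℂ) - a))‖ₑ ^ (4 / 3 : ℝ) ≤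
      ENNReal.ofReal (4 * K * (1 + x)) := by
    rw [mul_assoc, ENNReal.ofReal_mul (by norm_num), ENNReal.ofReal_ofNat]
    exact (setLIntegral_enorm_inv_mul_sqrt_sub_rpow_le a).trans (by gcongr; exact hKest a ha)
  rw [eLpNorm_eq_lintegral_rpow_enorm_toReal (by norm_num) ENNReal.ofReal_ne_top,
    ENNReal.toReal_ofReal (by norm_num), show (1 / (4 / 3 : ℝ)) = 3 / 4 by norm_num]
  calc _ ≤ ENNReal.ofReal (4 * K * (1 + x)) ^ (3 / 4 : ℝ) := by gcongr
    _ = ENNReal.ofReal ((4 * K) ^ (3 / 4 : ℝ) * (1 + x) ^ (3 / 4 : ℝ)) := by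
        rw [ENNReal.ofReal_rpow_of_nonneg (by positivity) (by norm_num),
          Real.mul_rpow (by positivity) (by positivity)]
    _ ≤ ENNReal.ofReal ((4 * K) ^ (3 / 4 : ℝ) * (1 + x ^ (3 / 4 : ℝ))) := by
        gcongr
        simpa using Real.rpow_add_le_add_rpow zero_le_one hx (by norm_num) (by norm_num)
end

section
/- Let U ⊆ ℂ be an open set, let ρ : U → ℂ be continuously (real-)differentiable with ρ(z) ≠ 0 for all z ∈ U, set γ = ρ², and let u : U → ℂ be twice continuously (real-)differentiable. Suppose u satisfies the conductivity equation div(γ ∇u) = 0 on U, i.e. ∂_x(γ ∂_x u) + ∂_y(γ ∂_y u) = 0, where z = x + iy. Then the functions φ₁ = ρ · ∂u and φ₂ = ρ · ∂̄u satisfy the Dirac system ∂̄φ₁ = q₁₂ φ₂ and ∂φ₂ = q₂₁ φ₁ on U, where q₁₂ = −(∂ρ)/ρ and q₂₁ = −(∂̄ρ)/ρ. -/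
open Complex

/-- The directional (real) partial derivative of `f : ℂ → ℂ` at `z` in the direction `v`. -/
noncomputable def pd (v : ℂ) (f : ℂ → ℂ) (z : ℂ) : ℂ := fderiv ℝ f z v

/-- The Wirtinger derivative `∂f = (∂_x f − i ∂_y f)/2`. -/
noncomputable def wirtinger (f : ℂ → ℂ) (z : ℂ) : ℂ :=
  (pd 1 f z - Complex.I * pd Complex.I f z) / 2

/-- The conjugate Wirtinger derivative `∂̄f = (∂_x f + i ∂_y f)/2`. -/
noncomputable def wirtingerBar (f : ℂ → ℂ) (z : ℂ) : ℂ :=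
  (pd 1 f z + Complex.I * pd Complex.I f z) / 2

/-!
Expanding the divergence, `div(ρ² ∇u) = ρ² Δu + 2ρ ∇ρ · ∇u`, and in Wirtinger terms
`Δu = 4 ∂̄∂u = 4 ∂∂̄u` (symmetry of the second derivative) and `∇ρ · ∇u = 2 (∂ρ ∂̄u + ∂̄ρ ∂u)`.
So the conductivity equation says `ρ ∂̄∂u + ∂ρ ∂̄u + ∂̄ρ ∂u = 0`, and the Leibniz rule
`∂̄(ρ ∂u) = ∂̄ρ ∂u + ρ ∂̄∂u` (resp. `∂(ρ ∂̄u) = ∂ρ ∂̄u + ρ ∂∂̄u`) turns this into the Dirac system.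
-/

section Derivatives

variable {f g u : ℂ → ℂ} {z : ℂ}

lemma pd_mul (v : ℂ) (hf : DifferentiableAt ℝ f z) (hg : DifferentiableAt ℝ g z) :
    pd v (fun w => f w * g w) z = pd v f z * g z + f z * pd v g z := by
  simp only [pd, fderiv_fun_mul hf hg, add_apply, FunLike.coe_smul, Pi.smul_apply, smul_eq_mul]
  ring

lemma wirtinger_mul (hf : DifferentiableAt ℝ f z) (hg : DifferentiableAt ℝ g z) :
    wirtinger (fun w => f w * g w) z = wirtinger f z * g z + f z * wirtinger g z := by
  simp only [wirtinger, pd_mul _ hf hg]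
  ring

lemma wirtingerBar_mul (hf : DifferentiableAt ℝ f z) (hg : DifferentiableAt ℝ g z) :
    wirtingerBar (fun w => f w * g w) z = wirtingerBar f z * g z + f z * wirtingerBar g z := by
  simp only [wirtingerBar, pd_mul _ hf hg]
  ring

lemma pd_one_mul_add_pd_I_mul (f g : ℂ → ℂ) (z : ℂ) :
    pd 1 f z * pd 1 g z + pd I f z * pd I g z =
      2 * (wirtinger f z * wirtingerBar g z + wirtingerBar f z * wirtinger g z) := by
  simp only [wirtinger, wirtingerBar]
  linear_combination (pd I f z * pd I g z) * I_mul_I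

lemma ContDiffAt.differentiableAt_pd (hu : ContDiffAt ℝ 2 u z) (v : ℂ) :
    DifferentiableAt ℝ (pd v u) z :=
  ((hu.fderiv_right (m := 1) (by norm_num)).differentiableAt (by norm_num)).clm_apply
    (differentiableAt_const v)

lemma pd_pd_eq_fderiv_fderiv (hu : ContDiffAt ℝ 2 u z) (v w : ℂ) :
    pd v (pd w u) z = fderiv ℝ (fderiv ℝ u) z v w := by
  have hFu := (hu.fderiv_right (m := 1) (by norm_num)).differentiableAt (by norm_num)
  change fderiv ℝ (fun y => fderiv ℝ u y w) z v = _
  simp [fderiv_clm_apply hFu (differentiableAt_const w)]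

lemma pd_pd_comm (hu : ContDiffAt ℝ 2 u z) (v w : ℂ) :
    pd v (pd w u) z = pd w (pd v u) z := by
  rw [pd_pd_eq_fderiv_fderiv hu, pd_pd_eq_fderiv_fderiv hu]
  exact hu.isSymmSndFDerivAt (by norm_num) v w

lemma pd_add_mul_div_two (a v : ℂ) (hf : DifferentiableAt ℝ f z)
    (hg : DifferentiableAt ℝ g z) :
    pd v (fun w => (f w + a * g w) / 2) z = (pd v f z + a * pd v g z) / 2 := by
  have h := (hf.hasFDerivAt.fun_add (hg.hasFDerivAt.const_mul a)).mul_const (2⁻¹ : ℂ)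
  simp only [div_eq_mul_inv, pd, h.fderiv, smul_add, add_apply, smul_apply, smul_eq_mul]
  ring

lemma pd_wirtinger (h1 : DifferentiableAt ℝ (pd 1 f) z) (hI : DifferentiableAt ℝ (pd I f) z)
    (v : ℂ) : pd v (wirtinger f) z = (pd v (pd 1 f) z - I * pd v (pd I f) z) / 2 := by
  have h := pd_add_mul_div_two (-I) v h1 hI
  simp only [neg_mul, ← sub_eq_add_neg] at h
  exact h

lemma pd_wirtingerBar (h1 : DifferentiableAt ℝ (pd 1 f) z) (hI : DifferentiableAt ℝ (pd I f) z)
    (v : ℂ) : pd v (wirtingerBar f) z = (pd v (pd 1 f) z + I * pd v (pd I f) z) / 2 :=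
  pd_add_mul_div_two I v h1 hI

lemma ContDiffAt.differentiableAt_wirtinger (hu : ContDiffAt ℝ 2 u z) :
    DifferentiableAt ℝ (wirtinger u) z := by
  have h1 := hu.differentiableAt_pd 1
  have hI := hu.differentiableAt_pd I
  unfold wirtinger
  fun_prop

lemma ContDiffAt.differentiableAt_wirtingerBar (hu : ContDiffAt ℝ 2 u z) :
    DifferentiableAt ℝ (wirtingerBar u) z := by
  have h1 := hu.differentiableAt_pd 1
  have hI := hu.differentiableAt_pd I
  unfold wirtingerBar
  fun_prop

lemma four_mul_wirtingerBar_wirtinger (hu : ContDiffAt ℝ 2 u z) :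
    4 * wirtingerBar (wirtinger u) z = pd 1 (pd 1 u) z + pd I (pd I u) z := by
  simp only [wirtingerBar, pd_wirtinger (hu.differentiableAt_pd 1) (hu.differentiableAt_pd I),
    pd_pd_comm hu I 1]
  linear_combination (-pd I (pd I u) z) * I_mul_I

lemma wirtinger_wirtingerBar (hu : ContDiffAt ℝ 2 u z) :
    wirtinger (wirtingerBar u) z = wirtingerBar (wirtinger u) z := by
  simp only [wirtinger, wirtingerBar,
    pd_wirtinger (hu.differentiableAt_pd 1) (hu.differentiableAt_pd I),
    pd_wirtingerBar (hu.differentiableAt_pd 1) (hu.differentiableAt_pd I), pd_pd_comm hu I 1]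
  ring

end Derivatives

/-- `div(γ ∇u)` at `z`. -/
noncomputable def divMulGrad (γ u : ℂ → ℂ) (z : ℂ) : ℂ :=
  pd 1 (fun w => γ w * pd 1 u w) z + pd I (fun w => γ w * pd I u w) z

lemma divMulGrad_eq {γ u : ℂ → ℂ} {z : ℂ} (hγ : DifferentiableAt ℝ γ z)
    (hu : ContDiffAt ℝ 2 u z) :
    divMulGrad γ u z = 4 * γ z * wirtingerBar (wirtinger u) z +
      2 * (wirtinger γ z * wirtingerBar u z + wirtingerBar γ z * wirtinger u z) := by
  rw [divMulGrad, pd_mul 1 hγ (hu.differentiableAt_pd 1), pd_mul I hγ (hu.differentiableAt_pd I)]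
  linear_combination (-γ z) * four_mul_wirtingerBar_wirtinger hu + pd_one_mul_add_pd_I_mul γ u z

/-- **reduction of the conductivity equation to a Dirac system.**
Let `U ⊆ ℂ` be open, `ρ : U → ℂ` be `C¹` and nonvanishing on `U`, `γ = ρ²`, and let
`u : U → ℂ` be `C²` satisfying `div(γ ∇u) = 0` on `U`, i.e.
`∂_x(γ ∂_x u) + ∂_y(γ ∂_y u) = 0`. Then `φ₁ = ρ ∂u` and `φ₂ = ρ ∂̄u` satisfy the Dirac system
`∂̄φ₁ = q₁₂ φ₂`, `∂φ₂ = q₂₁ φ₁` on `U`, where `q₁₂ = −(∂ρ)/ρ` and `q₂₁ = −(∂̄ρ)/ρ`. -/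
theorem conductivity_to_dirac (U : Set ℂ) (hU : IsOpen U)
    (ρ : ℂ → ℂ) (hρ : ContDiffOn ℝ 1 ρ U) (hρ0 : ∀ z ∈ U, ρ z ≠ 0)
    (u : ℂ → ℂ) (hu : ContDiffOn ℝ 2 u U)
    (hcond : ∀ z ∈ U,
      pd 1 (fun w => (ρ w) ^ 2 * pd 1 u w) z +
        pd Complex.I (fun w => (ρ w) ^ 2 * pd Complex.I u w) z = 0) :
    ∀ z ∈ U,
      wirtingerBar (fun w => ρ w * wirtinger u w) z =
          (-(wirtinger ρ z) / ρ z) * (ρ z * wirtingerBar u z) ∧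
      wirtinger (fun w => ρ w * wirtingerBar u w) z =
          (-(wirtingerBar ρ z) / ρ z) * (ρ z * wirtinger u z) := by
  intro z hz
  have hρz := hρ0 z hz
  have hρd : DifferentiableAt ℝ ρ z :=
    (hρ.contDiffAt (hU.mem_nhds hz)).differentiableAt one_ne_zero
  have hu2 : ContDiffAt ℝ 2 u z := hu.contDiffAt (hU.mem_nhds hz)
  have hdiv : divMulGrad (fun w => ρ w * ρ w) u z = 0 := by
    have h := hcond z hz
    simp only [sq] at h
    exact h
  rw [divMulGrad_eq (hρd.fun_mul hρd) hu2, wirtinger_mul hρd hρd, wirtingerBar_mul hρd hρd] at hdiv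
  have hkey : ρ z * wirtingerBar (wirtinger u) z + wirtinger ρ z * wirtingerBar u z +
      wirtingerBar ρ z * wirtinger u z = 0 := by
    apply mul_left_cancel₀ (mul_ne_zero (by norm_num : (4 : ℂ) ≠ 0) hρz)
    linear_combination hdiv
  refine ⟨?_, ?_⟩
  · rw [wirtingerBar_mul hρd hu2.differentiableAt_wirtinger]
    field_simp
    linear_combination hkey
  · rw [wirtinger_mul hρd hu2.differentiableAt_wirtingerBar, wirtinger_wirtingerBar hu2]
    field_simp
    linear_combination hkey
end
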